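/- Let H ∈ ℂ^{M×N}, A ∈ ℂ^{M×K}, F(W) = (1/2)‖HW − A‖_F², ∇F(W) = Hᴴ(HW − A), and suppose L > 0 satisfies ‖HX‖_F² ≤ L‖X‖_F² for all X ∈ ℂ^{N×K}. Fix η > 0, let Ω = {W ∈ ℂ^{N×K} : for every row index n, Σ_k |w_{n,k}|² ≤ η}, let 0 < α < 1/L, and let W_opt ∈ Ω satisfy F(W_opt) ≤ F(V) for all V ∈ Ω. If Wᵗ ∈ ℂ^{N×K} and Wᵗ⁺¹ ∈ Ω is the metric projection of Wᵗ − α∇F(Wᵗ) onto Ω, then ‖Wᵗ − W_opt‖_F² ≥ ‖Wᵗ⁺¹ − W_opt‖_F² + (1 − αL)‖Wᵗ − Wᵗ⁺¹‖_F². -/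

import Mathlib

open Matrix
open scoped BigOperators

/-- Frobenius norm of a complex matrix. -/
noncomputable def frobNorm {m n : Type*} [Fintype m] [Fintype n] (X : Matrix m n ℂ) : ℝ :=
  Real.sqrt (∑ i, ∑ j, ‖X i j‖ ^ 2)

/-- Real part of the Frobenius inner product: Re(trace(Xᴴ Y)). -/
noncomputable def reInnerF {m n : Type*} [Fintype m] [Fintype n] (X Y : Matrix m n ℂ) : ℝ :=
  (Matrix.trace (Xᴴ * Y)).re

/-- Objective F(W) = (1/2)‖HW − A‖_F². -/
noncomputable def objF {M N K : ℕ} (H : Matrix (Fin M) (Fin N) ℂ)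
    (A : Matrix (Fin M) (Fin K) ℂ) (W : Matrix (Fin N) (Fin K) ℂ) : ℝ :=
  (1 / 2) * frobNorm (H * W - A) ^ 2

/-- Gradient ∇F(W) = Hᴴ(HW − A). -/
noncomputable def gradF {M N K : ℕ} (H : Matrix (Fin M) (Fin N) ℂ)
    (A : Matrix (Fin M) (Fin K) ℂ) (W : Matrix (Fin N) (Fin K) ℂ) :
    Matrix (Fin N) (Fin K) ℂ :=
  Hᴴ * (H * W - A)

/-- Feasible set Ω = {W : each row has squared norm ≤ η}. -/
def OmegaSet {N K : ℕ} (η : ℝ) : Set (Matrix (Fin N) (Fin K) ℂ) :=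
  {W | ∀ n, (∑ k, ‖W n k‖ ^ 2) ≤ η}

lemma frobNorm_sq {m n : Type*} [Fintype m] [Fintype n] (X : Matrix m n ℂ) :
    frobNorm X ^ 2 = ∑ i, ∑ j, ‖X i j‖ ^ 2 :=
  Real.sq_sqrt (by positivity)

lemma reInnerF_eq_sum {m n : Type*} [Fintype m] [Fintype n] (X Y : Matrix m n ℂ) :
    reInnerF X Y = ∑ i, ∑ j, ((starRingEnd ℂ) (X i j) * Y i j).re := by
  rw [reInnerF, Matrix.trace]
  simp only [Matrix.diag_apply, Matrix.mul_apply, Matrix.conjTranspose_apply,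
    Complex.re_sum, Complex.star_def]
  rw [Finset.sum_comm]

lemma qF_eq_reInner {m n : Type*} [Fintype m] [Fintype n] (X : Matrix m n ℂ) :
    (∑ i, ∑ j, ‖X i j‖ ^ 2) = reInnerF X X := by
  rw [reInnerF_eq_sum]
  congr 1; ext i; congr 1; ext j
  rw [Complex.conj_mul']
  simp [← Complex.sq_norm, ← Complex.ofReal_pow]

lemma reInnerF_comm {m n : Type*} [Fintype m] [Fintype n] (X Y : Matrix m n ℂ) :
    reInnerF X Y = reInnerF Y X := by
  unfold reInnerF
  rw [show Yᴴ * X = (Xᴴ * Y)ᴴ by rw [conjTranspose_mul, conjTranspose_conjTranspose],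
    Matrix.trace_conjTranspose]
  simp

lemma reInnerF_add_left {m n : Type*} [Fintype m] [Fintype n] (X Y Z : Matrix m n ℂ) :
    reInnerF (X + Y) Z = reInnerF X Z + reInnerF Y Z := by
  simp [reInnerF, conjTranspose_add, Matrix.add_mul]

lemma reInnerF_sub_left {m n : Type*} [Fintype m] [Fintype n] (X Y Z : Matrix m n ℂ) :
    reInnerF (X - Y) Z = reInnerF X Z - reInnerF Y Z := by
  simp [reInnerF, conjTranspose_sub, Matrix.sub_mul]

lemma reInnerF_add_right {m n : Type*} [Fintype m] [Fintype n] (X Y Z : Matrix m n ℂ) :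
    reInnerF X (Y + Z) = reInnerF X Y + reInnerF X Z := by
  simp [reInnerF, Matrix.mul_add]

lemma reInnerF_sub_right {m n : Type*} [Fintype m] [Fintype n] (X Y Z : Matrix m n ℂ) :
    reInnerF X (Y - Z) = reInnerF X Y - reInnerF X Z := by
  simp [reInnerF, Matrix.mul_sub]

lemma reInnerF_smul_left {m n : Type*} [Fintype m] [Fintype n] (c : ℝ) (X Y : Matrix m n ℂ) :
    reInnerF (c • X) Y = c * reInnerF X Y := by
  simp [reInnerF, Matrix.conjTranspose_smul, smul_mul_assoc, Matrix.trace_smul, Complex.smul_re]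

lemma reInnerF_neg_right {m n : Type*} [Fintype m] [Fintype n] (X Y : Matrix m n ℂ) :
    reInnerF X (-Y) = -reInnerF X Y := by
  simp [reInnerF, Matrix.mul_neg]

lemma reInnerF_smul_right {m n : Type*} [Fintype m] [Fintype n] (c : ℝ) (X Y : Matrix m n ℂ) :
    reInnerF X (c • Y) = c * reInnerF X Y := by
  simp [reInnerF, Matrix.mul_smul, Matrix.trace_smul, Complex.smul_re]

lemma reInnerF_adj {M N K : ℕ} (H : Matrix (Fin M) (Fin N) ℂ)
    (X : Matrix (Fin M) (Fin K) ℂ) (D : Matrix (Fin N) (Fin K) ℂ) :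
    reInnerF (Hᴴ * X) D = reInnerF X (H * D) := by
  simp [reInnerF, conjTranspose_mul, conjTranspose_conjTranspose, Matrix.mul_assoc]

lemma frobNorm_add_sq {m n : Type*} [Fintype m] [Fintype n] (X Y : Matrix m n ℂ) :
    frobNorm (X + Y) ^ 2 = frobNorm X ^ 2 + 2 * reInnerF X Y + frobNorm Y ^ 2 := by
  rw [frobNorm_sq, frobNorm_sq, frobNorm_sq, qF_eq_reInner, qF_eq_reInner, qF_eq_reInner]
  rw [reInnerF_add_left, reInnerF_add_right, reInnerF_add_right, reInnerF_comm Y X]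
  ring

lemma frobNorm_smul_sq {m n : Type*} [Fintype m] [Fintype n] (c : ℝ) (X : Matrix m n ℂ) :
    frobNorm (c • X) ^ 2 = c ^ 2 * frobNorm X ^ 2 := by
  rw [frobNorm_sq, frobNorm_sq, Finset.mul_sum]
  congr 1; ext i; rw [Finset.mul_sum]
  congr 1; ext j
  simp [Matrix.smul_apply, norm_smul, mul_pow, sq_abs]

lemma frobNorm_sub_comm {m n : Type*} [Fintype m] [Fintype n] (X Y : Matrix m n ℂ) :
    frobNorm (X - Y) = frobNorm (Y - X) := by
  unfold frobNorm
  congr 1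
  refine Finset.sum_congr rfl fun i _ => Finset.sum_congr rfl fun j _ => ?_
  rw [Matrix.sub_apply, Matrix.sub_apply, norm_sub_rev]

lemma row_convex {K : ℕ} (a b : Fin K → ℂ) (η t : ℝ) (ht0 : 0 ≤ t) (ht1 : t ≤ 1)
    (ha : ∑ k, ‖a k‖ ^ 2 ≤ η) (hb : ∑ k, ‖b k‖ ^ 2 ≤ η) :
    ∑ k, ‖a k + t • (b k - a k)‖ ^ 2 ≤ η := by
  have hη : 0 ≤ η := le_trans (by positivity) ha
  set u : EuclideanSpace ℂ (Fin K) := (WithLp.equiv 2 (Fin K → ℂ)).symm a with hu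
  set v : EuclideanSpace ℂ (Fin K) := (WithLp.equiv 2 (Fin K → ℂ)).symm b with hv
  have hnu : ‖u‖ ≤ Real.sqrt η := by
    rw [EuclideanSpace.norm_eq]
    exact Real.sqrt_le_sqrt (by simpa [hu] using ha)
  have hnv : ‖v‖ ≤ Real.sqrt η := by
    rw [EuclideanSpace.norm_eq]
    exact Real.sqrt_le_sqrt (by simpa [hv] using hb)
  have key : ‖u + t • (v - u)‖ ≤ Real.sqrt η := by
    have : u + t • (v - u) = (1 - t) • u + t • v := by module
    rw [this]
    calc ‖(1 - t) • u + t • v‖ ≤ ‖(1 - t) • u‖ + ‖t • v‖ := norm_add_le _ _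
      _ = (1 - t) * ‖u‖ + t * ‖v‖ := by
          rw [norm_smul, norm_smul, Real.norm_eq_abs, Real.norm_eq_abs,
            abs_of_nonneg (by linarith), abs_of_nonneg ht0]
      _ ≤ (1 - t) * Real.sqrt η + t * Real.sqrt η := by
          have h1 : (0:ℝ) ≤ 1 - t := by linarith
          gcongr
      _ = Real.sqrt η := by ring
  have key2 : ‖u + t • (v - u)‖ ^ 2 ≤ η := by
    have := pow_le_pow_left₀ (norm_nonneg _) key 2
    rwa [Real.sq_sqrt hη] at this
  calc ∑ k, ‖a k + t • (b k - a k)‖ ^ 2 = ‖u + t • (v - u)‖ ^ 2 := by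
        rw [EuclideanSpace.norm_eq, Real.sq_sqrt (by positivity)]
        refine Finset.sum_congr rfl fun k _ => ?_
        congr 2
    _ ≤ η := key2

lemma omega_convex {N K : ℕ} (η t : ℝ) (ht0 : 0 ≤ t) (ht1 : t ≤ 1)
    (W V : Matrix (Fin N) (Fin K) ℂ) (hW : W ∈ OmegaSet η) (hV : V ∈ OmegaSet η) :
    W + t • (V - W) ∈ OmegaSet η := by
  intro n
  have := row_convex (fun k => W n k) (fun k => V n k) η t ht0 ht1 (hW n) (hV n)
  simpa [Matrix.add_apply, Matrix.smul_apply, Matrix.sub_apply] using this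

lemma smooth_identity {M N K : ℕ} (H : Matrix (Fin M) (Fin N) ℂ)
    (A : Matrix (Fin M) (Fin K) ℂ) (X Y : Matrix (Fin N) (Fin K) ℂ) :
    objF H A Y = objF H A X + reInnerF (gradF H A X) (Y - X)
      + (1 / 2) * frobNorm (H * (Y - X)) ^ 2 := by
  have hsplit : H * Y - A = (H * X - A) + H * (Y - X) := by
    rw [Matrix.mul_sub]; abel
  rw [objF, objF, hsplit, frobNorm_add_sq, gradF, reInnerF_adj]
  ring

lemma proj_vi {N K : ℕ} (η : ℝ) (Z Wt1 V : Matrix (Fin N) (Fin K) ℂ)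
    (hWt1 : Wt1 ∈ OmegaSet η) (hV : V ∈ OmegaSet η)
    (hproj : ∀ U ∈ OmegaSet η, frobNorm (Z - Wt1) ≤ frobNorm (Z - U)) :
    reInnerF (Z - Wt1) (V - Wt1) ≤ 0 := by
  set r := reInnerF (Z - Wt1) (V - Wt1) with hr
  have hqD : 0 ≤ frobNorm (V - Wt1) ^ 2 := sq_nonneg _
  set qD := frobNorm (V - Wt1) ^ 2 with hq
  have key : ∀ t : ℝ, 0 ≤ t → t ≤ 1 → 2 * t * r ≤ t ^ 2 * qD := by
    intro t ht0 ht1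
    have hmem := omega_convex η t ht0 ht1 Wt1 V hWt1 hV
    have h1 := hproj _ hmem
    have h2 := pow_le_pow_left₀ (Real.sqrt_nonneg _) h1 2
    have hdec : Z - (Wt1 + t • (V - Wt1)) = (Z - Wt1) + (-(t • (V - Wt1))) := by abel
    rw [hdec, frobNorm_add_sq, reInnerF_neg_right, reInnerF_smul_right, ← neg_smul,
      frobNorm_smul_sq] at h2
    replace h2 : frobNorm (Z - Wt1) ^ 2
        ≤ frobNorm (Z - Wt1) ^ 2 + 2 * -(t * r) + (-t) ^ 2 * qD := h2
    nlinarith [h2]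
  by_contra hpos
  push_neg at hpos
  rcases eq_or_lt_of_le hqD with hq0 | hq0
  · have := key 1 zero_le_one le_rfl
    nlinarith
  · have htpos : 0 < min 1 (r / qD) := lt_min one_pos (div_pos hpos hq0)
    have hkey := key (min 1 (r / qD)) htpos.le (min_le_left _ _)
    have hle : min 1 (r / qD) ≤ r / qD := min_le_right _ _
    have hmul : min 1 (r / qD) * qD ≤ r := by
      have h := mul_le_mul_of_nonneg_right hle hq0.le
      rwa [div_mul_cancel₀ r (ne_of_gt hq0)] at h
    nlinarith [mul_pos htpos hpos, mul_le_mul_of_nonneg_left hmul htpos.le]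

theorem pgd_distance_decrease {M N K : ℕ}
    (H : Matrix (Fin M) (Fin N) ℂ) (A : Matrix (Fin M) (Fin K) ℂ)
    (L : ℝ) (hL : 0 < L)
    (hHL : ∀ X : Matrix (Fin N) (Fin K) ℂ, frobNorm (H * X) ^ 2 ≤ L * frobNorm X ^ 2)
    (η : ℝ) (hη : 0 < η) (α : ℝ) (hα0 : 0 < α) (hα : α < 1 / L)
    (Wopt : Matrix (Fin N) (Fin K) ℂ) (hWoptΩ : Wopt ∈ OmegaSet η)
    (hWopt : ∀ V ∈ OmegaSet η, objF H A Wopt ≤ objF H A V)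
    (Wt Wt1 : Matrix (Fin N) (Fin K) ℂ) (hWt1 : Wt1 ∈ OmegaSet η)
    (hproj : ∀ V ∈ OmegaSet η,
      frobNorm ((Wt - α • gradF H A Wt) - Wt1) ≤ frobNorm ((Wt - α • gradF H A Wt) - V)) :
    frobNorm (Wt - Wopt) ^ 2
      ≥ frobNorm (Wt1 - Wopt) ^ 2 + (1 - α * L) * frobNorm (Wt - Wt1) ^ 2 := by
  -- Variational inequality for the projection
  have hvi : reInnerF ((Wt - α • gradF H A Wt) - Wt1) (Wopt - Wt1) ≤ 0 :=
    proj_vi η (Wt - α • gradF H A Wt) Wt1 Wopt hWt1 hWoptΩ hproj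
  have evi : reInnerF ((Wt - α • gradF H A Wt) - Wt1) (Wopt - Wt1)
      = -(reInnerF (Wt - Wt1) (Wt1 - Wopt))
        + α * reInnerF (gradF H A Wt) (Wt1 - Wopt) := by
    have e1 : (Wt - α • gradF H A Wt) - Wt1 = (Wt - Wt1) - α • gradF H A Wt := by abel
    have e2 : Wopt - Wt1 = -(Wt1 - Wopt) := by abel
    rw [e1, e2]
    simp only [reInnerF_neg_right, reInnerF_sub_left, reInnerF_smul_left]
    ring
  -- smoothness and convexity facts
  have hg1 := smooth_identity H A Wt Wopt
  have hg2 := smooth_identity H A Wt Wt1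
  have hsm := hHL (Wt1 - Wt)
  have hq0 : (0:ℝ) ≤ frobNorm (H * (Wopt - Wt)) ^ 2 := sq_nonneg _
  have hfopt : objF H A Wopt ≤ objF H A Wt1 := hWopt _ hWt1
  have egs : reInnerF (gradF H A Wt) (Wt1 - Wopt)
      = reInnerF (gradF H A Wt) (Wt1 - Wt) - reInnerF (gradF H A Wt) (Wopt - Wt) := by
    rw [show Wt1 - Wopt = (Wt1 - Wt) - (Wopt - Wt) by abel, reInnerF_sub_right]
  have enorm : frobNorm (Wt1 - Wt) = frobNorm (Wt - Wt1) := frobNorm_sub_comm _ _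
  rw [enorm] at hsm
  -- gradient term lower bound
  have hglb : reInnerF (gradF H A Wt) (Wt1 - Wopt) ≥ -(L / 2) * frobNorm (Wt - Wt1) ^ 2 := by
    rw [egs]
    nlinarith [hg1, hg2, hsm, hq0, hfopt]
  -- inner product lower bound
  have hrlb : reInnerF (Wt - Wt1) (Wt1 - Wopt)
      ≥ -(α * L / 2) * frobNorm (Wt - Wt1) ^ 2 := by
    have h1 : -(reInnerF (Wt - Wt1) (Wt1 - Wopt))
        + α * reInnerF (gradF H A Wt) (Wt1 - Wopt) ≤ 0 := evi ▸ hvi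
    nlinarith [mul_le_mul_of_nonneg_left hglb hα0.le]
  -- expansion of the distance
  have hexp : frobNorm (Wt - Wopt) ^ 2
      = frobNorm (Wt - Wt1) ^ 2 + 2 * reInnerF (Wt - Wt1) (Wt1 - Wopt)
        + frobNorm (Wt1 - Wopt) ^ 2 := by
    rw [show Wt - Wopt = (Wt - Wt1) + (Wt1 - Wopt) by abel, frobNorm_add_sq]
  rw [hexp]
  nlinarith [hrlb]
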